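/- arXiv:math/0507311 — 2 statements merged into one kernel-verified Lean document; each statement's English description precedes it below -/
import Mathlib

section
/- Let A be a finite arrangement of affine hyperplanes in a finite-dimensional vector space V over a field, and let F^q ⊆ V be a q-dimensional affine subspace generic with respect to A. Then the Poincaré polynomial of the restricted arrangement A ∩ F^q in F^q is the degree-q truncation of that of A: π(A ∩ F^q, t) = Σ_{i=0}^{q} b_i(A) t^i, where b_i(A) is the coefficient of t^i in π(A,t). -/
open scoped Classical

noncomputable section

variable (K : Type) [Field K] {V : Type} [AddCommGroup V] [Module K V]

/-- An affine hyperplane in `V`: the level set of a nonzero linear functional. -/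
def IsHyperplane (H : Set V) : Prop :=
  ∃ (f : V →ₗ[K] K) (c : K), f ≠ 0 ∧ H = {x | f x = c}

/-- The dimension of a subset of `V`: the dimension of its affine span. -/
def flatDim (X : Set V) : ℕ := Module.finrank K (affineSpan K X).direction

/-- The intersection poset `L(A)` of the arrangement `A` inside the ambient set `W`:
all nonempty intersections of subfamilies of `A` (intersected with the ambient `W`),
the empty subfamily giving `W` itself. -/
def interPosetIn (W : Set V) (A : Finset (Set V)) : Finset (Set V) :=
  (A.powerset.image fun S => W ∩ ⋂ H ∈ S, H).filter fun X => X.Nonempty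

/-- The rank of `X`: its codimension within the ambient space `W`. -/
def rkIn (W X : Set V) : ℕ := flatDim K W - flatDim K X

/-- `μ` satisfies the defining recursion of the Möbius function of the poset
`L(A)` inside the ambient set `W`.  `L(A)` is ordered by reverse inclusion, so the
condition `μ(W) = 1`, `μ(X) = -∑_{Y < X} μ(Y)` for `X > W` is equivalent to:
for every `X ∈ L(A)`, `∑_{Y ⊇ X} μ(Y)` is `1` if `X = W` and `0` otherwise. -/
def IsMobiusIn (W : Set V) (A : Finset (Set V)) (μ : Set V → ℤ) : Prop :=
  ∀ X ∈ interPosetIn W A,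
    (∑ Y ∈ (interPosetIn W A).filter fun Y => X ⊆ Y, μ Y) = if X = W then 1 else 0

/-- The Poincaré polynomial `π(A,t) = ∑_{X ∈ L(A)} μ(X) (-t)^{r(X)}`. -/
def poinIn (W : Set V) (A : Finset (Set V)) (μ : Set V → ℤ) : Polynomial ℤ :=
  ∑ X ∈ interPosetIn W A, Polynomial.C (μ X) * (- Polynomial.X) ^ (rkIn K W X)

/-- A chamber of the arrangement `A` within the ambient set `W`: a connected
component of `W ∖ ⋃_{H ∈ A} H`. -/
def IsChamberIn [TopologicalSpace V] (W : Set V) (A : Finset (Set V)) (C : Set V) : Prop :=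
  ∃ x ∈ W ∩ (⋃ H ∈ A, (H : Set V))ᶜ, C = connectedComponentIn (W ∩ (⋃ H ∈ A, (H : Set V))ᶜ) x

/-- `F` is a generic (transversal) `q`-dimensional affine subspace for the
arrangement `A`: it is (the carrier of) an affine subspace of dimension `q`, and
for every `X ∈ L(A)`, if `r(X) ≤ q` then `F ∩ X` is nonempty of dimension
`q - r(X)`, and if `r(X) > q` then `F ∩ X = ∅`. -/
def IsGenericFlat (q : ℕ) (A : Finset (Set V)) (F : Set V) : Prop :=
  (∃ W : AffineSubspace K V, (W : Set V) = F) ∧ F.Nonempty ∧ flatDim K F = q ∧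
  ∀ X ∈ interPosetIn Set.univ A,
    (rkIn K Set.univ X ≤ q → (F ∩ X).Nonempty ∧ flatDim K (F ∩ X) = q - rkIn K Set.univ X) ∧
    (q < rkIn K Set.univ X → F ∩ X = ∅)

end

/-!
Genericity of `F` makes `X ↦ F ∩ X` a rank-preserving bijection from the flats of `L(A)` of rank
at most `q` onto `L(A ∩ F)`: `F` meets `X` exactly when `r(X) ≤ q`, and the map reflects inclusion.
The flats of rank at most `q` form an up-set of `L(A)` (ordered by reverse inclusion), so on it the
Möbius recursions of `A` and of `A ∩ F` are the same triangular system and have the same solution.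
Hence `π(A ∩ F, t)` consists of exactly the terms of `π(A, t)` of degree at most `q`.
-/

open Finset

theorem eqOn_of_forall_sum_filter_le_eq {α M : Type*} [PartialOrder α] [AddCommGroup M]
    [DecidableLE α] {s : Finset α} {f g : α → M}
    (h : ∀ x ∈ s, ∑ y ∈ s with x ≤ y, f y = ∑ y ∈ s with x ≤ y, g y) : Set.EqOn f g s := by
  intro x hx
  induction hn : #{y ∈ s | x ≤ y} using Nat.strong_induction_on generalizing x with
  | _ n ih =>
  have hxx : x ∈ s.filter (x ≤ ·) := mem_filter.2 ⟨hx, le_rfl⟩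
  have hup : ∀ y ∈ (s.filter (x ≤ ·)).erase x, f y = g y := by
    intro y hy
    obtain ⟨hyx, hys, hxy⟩ := by simpa using hy
    refine ih _ ?_ hys rfl
    rw [← hn]
    refine card_lt_card ⟨fun z hz => ?_, fun hsub => ?_⟩
    · simp only [mem_filter] at hz ⊢
      exact ⟨hz.1, hxy.trans hz.2⟩
    · exact hyx (le_antisymm (mem_filter.1 (hsub hxx)).2 hxy)
  have := h x hx
  rw [← add_sum_erase _ _ hxx, ← add_sum_erase _ _ hxx, sum_congr rfl hup] at this
  exact add_right_cancel this

open Polynomial in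
theorem sum_range_C_coeff_mul_X_pow {R ι : Type*} [CommRing R] (s : Finset ι) (a : ι → R)
    (r : ι → ℕ) (q : ℕ) :
    ∑ i ∈ range (q + 1), C ((∑ x ∈ s, C (a x) * (-X) ^ r x).coeff i) * X ^ i =
      ∑ x ∈ s with r x ≤ q, C (a x) * (-X) ^ r x := by
  have hmono : ∀ x, C (a x) * (-X) ^ r x = monomial (r x) (a x * (-1) ^ r x) := fun x => by
    rw [neg_pow, ← C_mul_X_pow_eq_monomial]
    simp only [map_mul, map_pow, map_neg, map_one]
    ring
  simp only [hmono, C_mul_X_pow_eq_monomial]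
  ext n
  simp only [finsetSum_coeff, coeff_monomial, sum_filter, apply_ite (coeff · n), coeff_zero]
  rw [sum_ite_eq']
  split_ifs with hn <;> rw [mem_range] at hn
  · exact sum_congr rfl fun x _ => by split_ifs <;> first | rfl | omega
  · exact (sum_eq_zero fun x _ => by split_ifs <;> first | rfl | omega).symm

section IntersectionPoset

variable {V : Type}

theorem mem_interPosetIn {W : Set V} {A : Finset (Set V)} {X : Set V} :
    X ∈ interPosetIn W A ↔ (∃ S ⊆ A, W ∩ ⋂ H ∈ S, H = X) ∧ X.Nonempty := by
  simp [interPosetIn]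

theorem self_mem_interPosetIn {W : Set V} (A : Finset (Set V)) (hW : W.Nonempty) :
    W ∈ interPosetIn W A :=
  mem_interPosetIn.2 ⟨⟨∅, empty_subset A, by simp⟩, hW⟩

theorem inter_mem_interPosetIn {W : Set V} {A : Finset (Set V)} {X Y : Set V}
    (hX : X ∈ interPosetIn W A) (hY : Y ∈ interPosetIn W A) (hXY : (X ∩ Y).Nonempty) :
    X ∩ Y ∈ interPosetIn W A := by
  obtain ⟨⟨S, hSA, rfl⟩, -⟩ := mem_interPosetIn.1 hX
  obtain ⟨⟨T, hTA, rfl⟩, -⟩ := mem_interPosetIn.1 hY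
  refine mem_interPosetIn.2 ⟨⟨S ∪ T, union_subset hSA hTA, ?_⟩, hXY⟩
  ext x
  simp only [Set.mem_inter_iff, Set.mem_iInter, mem_union]
  grind

theorem inter_biInter_image_inter (F : Set V) (S : Finset (Set V)) :
    F ∩ ⋂ H ∈ S.image (· ∩ F), H = F ∩ ⋂ H ∈ S, H := by
  ext x
  simp +contextual

theorem interPosetIn_image_inter (A : Finset (Set V)) (F : Set V) :
    interPosetIn F (A.image (· ∩ F)) =
      ((interPosetIn Set.univ A).filter fun X => (F ∩ X).Nonempty).image (F ∩ ·) := by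
  ext Z
  simp only [mem_interPosetIn, mem_image, mem_filter, subset_image_iff]
  constructor
  · rintro ⟨⟨_, ⟨S, hSA, rfl⟩, rfl⟩, hne⟩
    rw [inter_biInter_image_inter] at hne ⊢
    refine ⟨_, ⟨⟨⟨S, hSA, rfl⟩, ?_⟩, ?_⟩, ?_⟩ <;> rw [Set.univ_inter]
    exacts [hne.mono Set.inter_subset_right, hne]
  · rintro ⟨_, ⟨⟨⟨S, hSA, rfl⟩, -⟩, hne⟩, rfl⟩
    rw [Set.univ_inter] at hne ⊢
    exact ⟨⟨_, ⟨S, hSA, rfl⟩, inter_biInter_image_inter F S⟩, hne⟩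

end IntersectionPoset

section Flats

variable {K : Type} [Field K] {V : Type} [AddCommGroup V] [Module K V]

variable (K) in
def IsFlat (X : Set V) : Prop :=
  ∃ P : AffineSubspace K V, (P : Set V) = X

theorem IsHyperplane.isFlat {H : Set V} (hH : IsHyperplane K H) : IsFlat K H := by
  obtain ⟨f, c, -, rfl⟩ := hH
  refine ⟨(affineSpan K {c}).comap f.toAffineMap, ?_⟩
  ext x
  simp

theorem isFlat_biInter {S : Finset (Set V)} (hS : ∀ H ∈ S, IsFlat K H) :
    IsFlat K (⋂ H ∈ S, H) := by
  refine ⟨sInf {P : AffineSubspace K V | (P : Set V) ∈ S}, ?_⟩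
  ext x
  simp only [AffineSubspace.coe_sInf, Set.mem_iInter, Set.mem_ofPred_eq]
  constructor
  · intro h H hH
    obtain ⟨P, rfl⟩ := hS H hH
    exact h P hH
  · exact fun h P hP => h _ hP

theorem IsFlat.inter {X Y : Set V} : IsFlat K X → IsFlat K Y → IsFlat K (X ∩ Y)
  | ⟨P, hP⟩, ⟨Q, hQ⟩ => ⟨P ⊓ Q, hP ▸ hQ ▸ AffineSubspace.coe_inf P Q⟩

theorem IsFlat.of_mem_interPosetIn {W : Set V} {A : Finset (Set V)} {X : Set V}
    (hW : IsFlat K W) (hA : ∀ H ∈ A, IsFlat K H) (hX : X ∈ interPosetIn W A) : IsFlat K X := by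
  obtain ⟨⟨S, hSA, rfl⟩, -⟩ := mem_interPosetIn.1 hX
  exact hW.inter (isFlat_biInter fun H hH => hA H (hSA hH))

theorem rkIn_univ (X : Set V) : rkIn K Set.univ X = Module.finrank K V - flatDim K X := by
  rw [rkIn, flatDim, AffineSubspace.span_univ, AffineSubspace.direction_top, finrank_top]

variable (K) in
noncomputable def truncInterPoset (A : Finset (Set V)) (q : ℕ) : Finset (Set V) :=
  (interPosetIn Set.univ A).filter fun X => rkIn K Set.univ X ≤ q

theorem univ_mem_truncInterPoset (A : Finset (Set V)) (q : ℕ) :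
    Set.univ ∈ truncInterPoset K A q :=
  mem_filter.2 ⟨self_mem_interPosetIn A Set.univ_nonempty, by simp [rkIn]⟩

variable [FiniteDimensional K V]

theorem flatDim_mono {X Y : Set V} (h : X ⊆ Y) : flatDim K X ≤ flatDim K Y :=
  Submodule.finrank_mono (AffineSubspace.direction_le (affineSpan_mono K h))

theorem flatDim_le_finrank (X : Set V) : flatDim K X ≤ Module.finrank K V :=
  Submodule.finrank_le _

theorem rkIn_univ_anti {X Y : Set V} (h : X ⊆ Y) : rkIn K Set.univ Y ≤ rkIn K Set.univ X := by
  rw [rkIn_univ, rkIn_univ]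
  exact Nat.sub_le_sub_left (flatDim_mono h) _

theorem flatDim_eq_of_rkIn_univ_eq {X Y : Set V} (h : rkIn K Set.univ X = rkIn K Set.univ Y) :
    flatDim K X = flatDim K Y := by
  rw [rkIn_univ, rkIn_univ] at h
  have := flatDim_le_finrank (K := K) X
  have := flatDim_le_finrank (K := K) Y
  omega

theorem IsFlat.eq_of_subset_of_flatDim_le {X Y : Set V} (hX : IsFlat K X) (hY : IsFlat K Y)
    (hne : X.Nonempty) (hXY : X ⊆ Y) (hdim : flatDim K Y ≤ flatDim K X) : X = Y := by
  obtain ⟨P, rfl⟩ := hX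
  obtain ⟨Q, rfl⟩ := hY
  rw [flatDim, flatDim, AffineSubspace.affineSpan_coe, AffineSubspace.affineSpan_coe] at hdim
  have hPQ : P ≤ Q := hXY
  rw [AffineSubspace.eq_of_direction_eq_of_nonempty_of_le
    (Submodule.eq_of_le_of_finrank_le (AffineSubspace.direction_le hPQ) hdim) hne hPQ]

theorem IsMobiusIn.sum_filter_truncInterPoset {A : Finset (Set V)} {q : ℕ} {X : Set V}
    {μ : Set V → ℤ} (hμ : IsMobiusIn Set.univ A μ) (hX : X ∈ truncInterPoset K A q) :
    ∑ Y ∈ truncInterPoset K A q with X ⊆ Y, μ Y = if X = Set.univ then 1 else 0 := by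
  obtain ⟨hXL, hXq⟩ := mem_filter.1 hX
  rw [truncInterPoset, filter_filter, ← hμ X hXL]
  exact sum_congr (filter_congr fun Y _ =>
    and_iff_right_of_imp fun hXY => (rkIn_univ_anti hXY).trans hXq) fun _ _ => rfl

end Flats

namespace IsGenericFlat

variable {K : Type} [Field K] {V : Type} [AddCommGroup V] [Module K V]
  {A : Finset (Set V)} {q : ℕ} {F X Y : Set V}

theorem inter_nonempty_iff (hF : IsGenericFlat K q A F) (hX : X ∈ interPosetIn Set.univ A) :
    (F ∩ X).Nonempty ↔ rkIn K Set.univ X ≤ q := by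
  obtain ⟨-, -, -, hgen⟩ := hF
  refine ⟨fun hne => ?_, fun hq => ((hgen X hX).1 hq).1⟩
  by_contra hq
  rw [(hgen X hX).2 (not_le.1 hq)] at hne
  exact Set.not_nonempty_empty hne

theorem rkIn_inter (hF : IsGenericFlat K q A F) (hX : X ∈ interPosetIn Set.univ A)
    (hq : rkIn K Set.univ X ≤ q) : rkIn K F (F ∩ X) = rkIn K Set.univ X := by
  obtain ⟨-, -, hdimF, hgen⟩ := hF
  rw [rkIn, hdimF, ((hgen X hX).1 hq).2]
  omega

theorem interPosetIn_image_inter (hF : IsGenericFlat K q A F) :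
    interPosetIn F (A.image (· ∩ F)) = (truncInterPoset K A q).image (F ∩ ·) := by
  rw [_root_.interPosetIn_image_inter, truncInterPoset]
  exact congrArg _ (filter_congr fun X hX => hF.inter_nonempty_iff hX)

variable [FiniteDimensional K V]

/-- If `F ∩ X ⊆ F ∩ Y`, then `X ∩ Y` and `X` have the same section by `F`, hence by genericity
the same rank, so the flat `X ∩ Y` fills `X`. -/
theorem inter_subset_inter_iff (hA : ∀ H ∈ A, IsHyperplane K H) (hF : IsGenericFlat K q A F)
    (hX : X ∈ truncInterPoset K A q) (hY : Y ∈ interPosetIn Set.univ A) :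
    F ∩ X ⊆ F ∩ Y ↔ X ⊆ Y := by
  refine ⟨fun hsub => ?_, Set.inter_subset_inter_right F⟩
  obtain ⟨hXL, hXq⟩ := mem_filter.1 hX
  have hFX : (F ∩ X).Nonempty := (hF.inter_nonempty_iff hXL).2 hXq
  have hsec : F ∩ (X ∩ Y) = F ∩ X :=
    (Set.inter_subset_inter_right F Set.inter_subset_left).antisymm fun z hz =>
      ⟨hz.1, hz.2, (hsub hz).2⟩
  have hXYne : (X ∩ Y).Nonempty := hFX.mono fun z hz => ⟨hz.2, (hsub hz).2⟩
  have hXYL : X ∩ Y ∈ interPosetIn Set.univ A := inter_mem_interPosetIn hXL hY hXYne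
  have hXYq : rkIn K Set.univ (X ∩ Y) ≤ q := (hF.inter_nonempty_iff hXYL).1 (hsec ▸ hFX)
  have hrk : rkIn K Set.univ (X ∩ Y) = rkIn K Set.univ X := by
    rw [← hF.rkIn_inter hXYL hXYq, ← hF.rkIn_inter hXL hXq, hsec]
  have hflat : ∀ Z ∈ interPosetIn Set.univ A, IsFlat K Z := fun Z =>
    IsFlat.of_mem_interPosetIn ⟨⊤, AffineSubspace.top_coe K V V⟩ fun H hH => (hA H hH).isFlat
  have hXY : X ∩ Y = X :=
    (hflat _ hXYL).eq_of_subset_of_flatDim_le (hflat X hXL) hXYne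
      Set.inter_subset_left (flatDim_eq_of_rkIn_univ_eq hrk).ge
  exact hXY ▸ Set.inter_subset_right

theorem injOn_inter (hA : ∀ H ∈ A, IsHyperplane K H) (hF : IsGenericFlat K q A F) :
    Set.InjOn (F ∩ ·) (truncInterPoset K A q) := fun _ hX _ hY hXY =>
  ((hF.inter_subset_inter_iff hA hX (mem_filter.1 hY).1).1 hXY.le).antisymm
    ((hF.inter_subset_inter_iff hA hY (mem_filter.1 hX).1).1 hXY.ge)

theorem sum_filter_mobius_inter (hA : ∀ H ∈ A, IsHyperplane K H) (hF : IsGenericFlat K q A F)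
    {μF : Set V → ℤ} (hμF : IsMobiusIn F (A.image (· ∩ F)) μF) (hX : X ∈ truncInterPoset K A q) :
    ∑ Y ∈ truncInterPoset K A q with X ⊆ Y, μF (F ∩ Y) = if X = Set.univ then 1 else 0 := by
  have hinj := hF.injOn_inter hA
  have h := hμF (F ∩ X) (hF.interPosetIn_image_inter ▸ mem_image_of_mem _ hX)
  rw [hF.interPosetIn_image_inter, filter_image,
    sum_image (hinj.mono fun Y hY => (mem_filter.1 hY).1)] at h
  have hF_univ : F ∩ X = F ↔ X = Set.univ :=
    ⟨fun hXF => hinj hX (univ_mem_truncInterPoset A q) (hXF.trans (Set.inter_univ F).symm),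
      fun hXuniv => hXuniv ▸ Set.inter_univ F⟩
  rw [← if_congr hF_univ rfl rfl, ← h]
  exact sum_congr (filter_congr fun Y hY =>
    (hF.inter_subset_inter_iff hA hX (mem_filter.1 hY).1).symm) fun _ _ => rfl

theorem mobius_inter_eqOn (hA : ∀ H ∈ A, IsHyperplane K H) (hF : IsGenericFlat K q A F)
    {μ μF : Set V → ℤ} (hμ : IsMobiusIn Set.univ A μ) (hμF : IsMobiusIn F (A.image (· ∩ F)) μF) :
    Set.EqOn (fun X => μF (F ∩ X)) μ (truncInterPoset K A q) :=
  eqOn_of_forall_sum_filter_le_eq fun _ hX =>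
    (hF.sum_filter_mobius_inter hA hμF hX).trans (hμ.sum_filter_truncInterPoset hX).symm

end IsGenericFlat

/-- For a generic `q`-dimensional affine subspace `F` of a finite
arrangement `A` of affine hyperplanes in a finite-dimensional vector space over a field,
the Poincaré polynomial of the restricted arrangement `A ∩ F = {H ∩ F : H ∈ A}` in `F`
is the degree-`q` truncation of that of `A`:
`π(A ∩ F, t) = ∑_{i=0}^{q} b_i(A) t^i`. -/
theorem poincare_of_generic_section {K : Type} [Field K] {V : Type} [AddCommGroup V]
    [Module K V] [FiniteDimensional K V]
    (A : Finset (Set V)) (hA : ∀ H ∈ A, IsHyperplane K H)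
    (q : ℕ) (F : Set V) (hF : IsGenericFlat K q A F)
    (μ μF : Set V → ℤ)
    (hμ : IsMobiusIn Set.univ A μ)
    (hμF : IsMobiusIn F (A.image fun H => H ∩ F) μF) :
    poinIn K F (A.image fun H => H ∩ F) μF
      = ∑ i ∈ Finset.range (q + 1),
          Polynomial.C ((poinIn K Set.univ A μ).coeff i) * Polynomial.X ^ i := by
  calc poinIn K F (A.image fun H => H ∩ F) μF
      = ∑ X ∈ truncInterPoset K A q,
          Polynomial.C (μF (F ∩ X)) * (-Polynomial.X) ^ rkIn K F (F ∩ X) := by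
        rw [poinIn, hF.interPosetIn_image_inter, sum_image (hF.injOn_inter hA)]
    _ = ∑ X ∈ truncInterPoset K A q,
          Polynomial.C (μ X) * (-Polynomial.X) ^ rkIn K Set.univ X :=
        sum_congr rfl fun X hX => by
          obtain ⟨hXL, hXq⟩ := mem_filter.1 hX
          have hμX : μF (F ∩ X) = μ X := hF.mobius_inter_eqOn hA hμ hμF hX
          rw [hμX, hF.rkIn_inter hXL hXq]
    _ = _ := by
        rw [poinIn, sum_range_C_coeff_mul_X_pow, truncInterPoset]
end

section
/- Let A be a finite arrangement of affine hyperplanes in ℝ^ℓ and let F : ∅ = F^{−1} ⊂ F^0 ⊂ F^1 ⊂ ⋯ ⊂ F^ℓ = ℝ^ℓ be a generic flag for A. For each q = 0, 1, …, ℓ let ch_q^F(A) = {C chamber of A : C ∩ F^q ≠ ∅ and C ∩ F^{q−1} = ∅}. Then |ch_q^F(A)| = b_q(A), the coefficient of t^q in the Poincaré polynomial π(A,t). -/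
/-!
Chambers are the open convex regions on which the sign vector with respect to `A` is constant,
so the chambers meeting a flat `S` correspond to the sign patterns realised on `S` off the
hyperplanes; let `r_A(S)` be their number. For `S ⊄ H`, `r_{A ∪ {H}}(S) = r_A(S) + r_A(S ∩ H)`:
a pattern is realised on both sides of `H` iff it is realised on `H` (the intermediate value
theorem in a convex region one way, openness of the regions the other). Whitney's sum
`∑_{B ⊆ A} (-1)^{|B| + codim_S (S ∩ ⋂ B)}` obeys the same recursion, hence equals `r_A(S)`.
On a generic `q`-flat the nonempty `F^q ∩ ⋂ B` are the traces of the `X ∈ L(A)` of rank `≤ q`,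
with codimension `r(X)`, so `|ch_q^F| = r_A(F^q) - r_A(F^{q-1}) = ∑_{r(⋂ B) = q} (-1)^{|B| + q}`,
which is `b_q` by Whitney's formula `μ(X) = ∑_{⋂ B = X} (-1)^{|B|}`.
-/

open scoped Classical

noncomputable section Mobius

variable {V : Type} {W : Set V} {A : Finset (Set V)}

theorem IsMobiusIn.eqOn {μ ν : Set V → ℤ} (hμ : IsMobiusIn W A μ) (hν : IsMobiusIn W A ν) :
    ∀ X ∈ interPosetIn W A, μ X = ν X := by
  intro X hX
  refine ((interPosetIn W A).finite_toSet.wellFoundedOn (r := (· > ·))).induction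
    (P := fun X => μ X = ν X) hX fun X hX ih => ?_
  set U := (interPosetIn W A).filter fun Y => X ⊆ Y
  have hXU : X ∈ U := Finset.mem_filter.mpr ⟨hX, subset_rfl⟩
  have hrest : ∑ Y ∈ U.erase X, μ Y = ∑ Y ∈ U.erase X, ν Y := by
    refine Finset.sum_congr rfl fun Y hY => ?_
    obtain ⟨hYX, hY⟩ := Finset.mem_erase.mp hY
    obtain ⟨hYL, hXY⟩ := Finset.mem_filter.mp hY
    exact ih Y hYL (lt_of_le_of_ne hXY (Ne.symm hYX))
  have h := (hμ X hX).trans (hν X hX).symm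
  rw [← Finset.add_sum_erase U μ hXU, ← Finset.add_sum_erase U ν hXU, hrest] at h
  exact add_right_cancel h

/-- Whitney's formula for the Möbius function of the intersection poset. -/
def whitneyMobius (W : Set V) (A : Finset (Set V)) (X : Set V) : ℤ :=
  ∑ B ∈ A.powerset with W ∩ ⋂ H ∈ B, H = X, (-1) ^ B.card

theorem isMobiusIn_whitneyMobius (hA : ∀ H ∈ A, ¬ W ⊆ H) :
    IsMobiusIn W A (whitneyMobius W A) := by
  intro X hX
  obtain ⟨hXim, hXne⟩ := Finset.mem_filter.mp hX
  obtain ⟨B₀, hB₀, hB₀X⟩ := Finset.mem_image.mp hXim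
  have hXW : X ⊆ W := hB₀X ▸ Set.inter_subset_left
  have hfilter : {B ∈ A.powerset | (W ∩ ⋂ H ∈ B, H) ∈ (interPosetIn W A).filter (X ⊆ ·)}
      = (A.filter (X ⊆ ·)).powerset := by
    ext B
    simp only [interPosetIn, Finset.mem_filter, Finset.mem_powerset, Finset.mem_image,
      Finset.subset_iff, Set.subset_inter_iff, Set.subset_iInter_iff]
    constructor
    · rintro ⟨hBA, -, -, hXB⟩ H hH
      exact ⟨hBA hH, hXB H hH⟩
    · intro hB
      refine ⟨fun H hH => (hB hH).1, ⟨⟨B, fun H hH => (hB hH).1, rfl⟩, hXne.mono ?_⟩,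
        hXW, fun H hH => (hB hH).2⟩
      exact Set.subset_inter hXW (Set.subset_iInter₂ fun H hH => (hB hH).2)
  unfold whitneyMobius
  rw [Finset.sum_fiberwise_eq_sum_filter, hfilter, Finset.sum_powerset_neg_one_pow_card]
  congr 1
  simp only [Finset.filter_eq_empty_iff, eq_iff_iff]
  constructor
  · intro h
    have hB₀_empty : B₀ = ∅ := Finset.eq_empty_of_forall_notMem fun H hH =>
      h (Finset.mem_powerset.mp hB₀ hH)
        (hB₀X ▸ Set.inter_subset_right.trans (Set.biInter_subset_of_mem hH))
    simp [← hB₀X, hB₀_empty]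
  · rintro rfl H hH hWH
    exact hA H hH hWH

end Mobius

noncomputable section Poincare

variable (K : Type) [Field K] {V : Type} [AddCommGroup V] [Module K V]

def signedRankSum (W : Set V) (A : Finset (Set V)) (I : Set ℕ) : ℤ :=
  ∑ B ∈ A.powerset, if (W ∩ ⋂ H ∈ B, H).Nonempty ∧ rkIn K W (W ∩ ⋂ H ∈ B, H) ∈ I
    then (-1) ^ (B.card + rkIn K W (W ∩ ⋂ H ∈ B, H)) else 0

variable {K} {W : Set V} {A : Finset (Set V)}

theorem signedRankSum_Iic_sub_Iio (q : ℕ) :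
    signedRankSum K W A (Set.Iic q) - signedRankSum K W A (Set.Iio q)
      = signedRankSum K W A {q} := by
  rw [signedRankSum, signedRankSum, signedRankSum, ← Finset.sum_sub_distrib]
  refine Finset.sum_congr rfl fun B _ => ?_
  simp only [Set.mem_Iic, Set.mem_Iio, Set.mem_singleton_iff]
  by_cases hne : (W ∩ ⋂ H ∈ B, H).Nonempty
  · simp only [hne, true_and]
    split_ifs <;> omega
  · simp only [hne, false_and, if_false, sub_self]

theorem coeff_poinIn (μ : Set V → ℤ) (q : ℕ) :
    (poinIn K W A μ).coeff q = ∑ X ∈ interPosetIn W A with rkIn K W X = q, μ X * (-1) ^ q := by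
  rw [poinIn, Polynomial.finsetSum_coeff, Finset.sum_filter]
  refine Finset.sum_congr rfl fun X _ => ?_
  rw [neg_pow, ← mul_assoc, ← Polynomial.C_1, ← Polynomial.C_neg, ← Polynomial.C_pow,
    ← Polynomial.C_mul, Polynomial.coeff_C_mul_X_pow]
  rcases eq_or_ne (rkIn K W X) q with rfl | h
  · simp
  · simp [h, Ne.symm h]

theorem coeff_poinIn_eq_signedRankSum (hA : ∀ H ∈ A, ¬ W ⊆ H) {μ : Set V → ℤ}
    (hμ : IsMobiusIn W A μ) (q : ℕ) :
    (poinIn K W A μ).coeff q = signedRankSum K W A {q} := by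
  have hwhitney := hμ.eqOn (isMobiusIn_whitneyMobius hA)
  rw [coeff_poinIn, Finset.sum_congr rfl fun X hX => by
    rw [hwhitney X (Finset.mem_filter.mp hX).1]]
  unfold whitneyMobius
  simp_rw [Finset.sum_mul, ← pow_add]
  rw [Finset.sum_fiberwise_eq_sum_filter, Finset.sum_filter, signedRankSum]
  refine Finset.sum_congr rfl fun B hB => ?_
  simp only [interPosetIn, Finset.mem_filter, Finset.mem_image, Set.mem_singleton_iff]
  split_ifs with h₁ h₂ h₂
  · rw [h₂.2]
  · exact absurd ⟨h₁.1.2, h₁.2⟩ h₂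
  · exact absurd ⟨⟨⟨B, hB, rfl⟩, h₂.1⟩, h₂.2⟩ h₁
  · rfl

end Poincare

noncomputable section WhitneyCount

variable (K : Type) [Field K] {V : Type} [AddCommGroup V] [Module K V]

/-- Whitney's formula for the number of regions of `A` restricted to `S`. The exponent
`dim S + dim (S ∩ ⋂ B)` has the parity of the codimension and avoids truncated subtraction. -/
def whitneyCount (A : Finset (Set V)) (S : Set V) : ℤ :=
  ∑ B ∈ A.powerset, if (S ∩ ⋂ H ∈ B, H).Nonempty then
    (-1) ^ (B.card + flatDim K S + flatDim K (S ∩ ⋂ H ∈ B, H)) else 0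

variable {K}

theorem whitneyCount_empty_left (S : Set V) :
    whitneyCount K ∅ S = if S.Nonempty then 1 else 0 := by
  simp [whitneyCount, ← two_mul, pow_mul]

theorem whitneyCount_empty_right (A : Finset (Set V)) : whitneyCount K A ∅ = 0 := by
  simp [whitneyCount]

theorem whitneyCount_insert {H₀ : Set V} {A : Finset (Set V)} (hH₀ : H₀ ∉ A) (S : Set V) :
    whitneyCount K (insert H₀ A) S = whitneyCount K A S
      - (-1) ^ (flatDim K S + flatDim K (S ∩ H₀)) * whitneyCount K A (S ∩ H₀) := by
  rw [whitneyCount, Finset.sum_powerset_insert hH₀, sub_eq_add_neg, ← neg_mul, whitneyCount,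
    whitneyCount, Finset.mul_sum]
  congr 1
  refine Finset.sum_congr rfl fun B hB => ?_
  have hH₀B : H₀ ∉ B := fun h => hH₀ (Finset.mem_powerset.mp hB h)
  rw [Finset.card_insert_of_notMem hH₀B, Finset.set_biInter_insert, ← Set.inter_assoc]
  split_ifs
  · rw [neg_mul, ← pow_add, ← mul_neg_one ((-1 : ℤ) ^ _), ← pow_succ]
    exact neg_one_pow_congr (by simp only [Nat.even_iff]; omega)
  · simp

theorem whitneyCount_of_isGenericFlat {q : ℕ} {A : Finset (Set V)} {F : Set V}
    (hF : IsGenericFlat K q A F) :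
    whitneyCount K A F = signedRankSum K Set.univ A (Set.Iic q) := by
  obtain ⟨-, -, hdim, htrans⟩ := hF
  refine Finset.sum_congr rfl fun B hB => ?_
  have hFX : F ∩ ⋂ H ∈ B, H = F ∩ (Set.univ ∩ ⋂ H ∈ B, H) := by rw [Set.univ_inter]
  rw [hFX, Set.mem_Iic]
  by_cases hX : (Set.univ ∩ ⋂ H ∈ B, H).Nonempty
  · have hXL : Set.univ ∩ ⋂ H ∈ B, H ∈ interPosetIn Set.univ A :=
      Finset.mem_filter.mpr ⟨Finset.mem_image.mpr ⟨B, hB, rfl⟩, hX⟩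
    obtain ⟨hle, hgt⟩ := htrans _ hXL
    by_cases hrk : rkIn K Set.univ (Set.univ ∩ ⋂ H ∈ B, H) ≤ q
    · obtain ⟨hne, hdimX⟩ := hle hrk
      rw [if_pos hne, if_pos ⟨hX, hrk⟩, hdimX, hdim]
      exact neg_one_pow_congr (by simp only [Nat.even_iff]; omega)
    · rw [hgt (not_le.mp hrk), if_neg Set.not_nonempty_empty, if_neg (not_and_of_not_right _ hrk)]
  · rw [if_neg fun h => hX (h.mono Set.inter_subset_right), if_neg (not_and_of_not_left _ hX)]

end WhitneyCount

section Hyperplane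

variable {K : Type} [Field K] {V : Type} [AddCommGroup V] [Module K V]

theorem flatDim_coe (S : AffineSubspace K V) :
    flatDim K (S : Set V) = Module.finrank K S.direction := by
  rw [flatDim, AffineSubspace.affineSpan_coe]

theorem IsHyperplane.not_univ_subset {H : Set V} (hH : IsHyperplane K H) : ¬ Set.univ ⊆ H := by
  obtain ⟨f, c, hf, rfl⟩ := hH
  intro h
  have hc : c = 0 := by simpa using (h (Set.mem_univ 0)).symm
  exact hf (LinearMap.ext fun v => by simpa [hc] using h (Set.mem_univ v))

theorem IsHyperplane.exists_affineSubspace {H : Set V} (hH : IsHyperplane K H) :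
    ∃ T : AffineSubspace K V, (T : Set V) = H := by
  obtain ⟨f, c, -, rfl⟩ := hH
  refine ⟨(AffineSubspace.mk' c (⊥ : Submodule K K)).comap f.toAffineMap, ?_⟩
  ext x
  rw [AffineSubspace.coe_comap, Set.mem_preimage, SetLike.mem_coe, AffineSubspace.mem_mk',
    Submodule.mem_bot, vsub_eq_sub, sub_eq_zero]
  rfl

variable [FiniteDimensional K V]

theorem flatDim_inter_add_one {S : AffineSubspace K V} {H : Set V} (hH : IsHyperplane K H)
    (hne : ((S : Set V) ∩ H).Nonempty) (hS : ¬ (S : Set V) ⊆ H) :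
    flatDim K ((S : Set V) ∩ H) + 1 = flatDim K (S : Set V) := by
  obtain ⟨f, c, -, rfl⟩ := hH
  obtain ⟨x, hxS, hxH⟩ := hne
  obtain ⟨y, hyS, hyH⟩ := Set.not_subset.mp hS
  set T := AffineSubspace.mk' x (LinearMap.ker f)
  have hT : flatDim K ((S : Set V) ∩ {z | f z = c}) = Module.finrank K (S ⊓ T).direction := by
    have hTH : {z | f z = c} = (T : Set V) := by
      ext z
      simp [T, AffineSubspace.mem_mk', sub_eq_zero, hxH.out]
    rw [hTH]
    exact flatDim_coe (S ⊓ T)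
  have hdir : (S ⊓ T).direction = S.direction ⊓ LinearMap.ker f := by
    rw [AffineSubspace.direction_inf_of_mem hxS (AffineSubspace.self_mem_mk' _ _),
      AffineSubspace.direction_mk']
  have hg : f.domRestrict S.direction ≠ 0 := by
    intro h
    have := LinearMap.congr_fun h ⟨y -ᵥ x, AffineSubspace.vsub_mem_direction hyS hxS⟩
    simp only [LinearMap.domRestrict_apply, vsub_eq_sub, map_sub, LinearMap.zero_apply,
      sub_eq_zero] at this
    exact hyH (this.trans hxH)
  rw [hT, flatDim_coe, hdir,
    ← Module.Dual.finrank_ker_add_one_of_ne_zero hg, LinearMap.ker_domRestrict,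
    ← Submodule.finrank_map_subtype_eq, Submodule.map_comap_subtype]

end Hyperplane

noncomputable section SignPatterns

variable {V : Type} [AddCommGroup V] [Module ℝ V]

def hyperplaneFun (H : Set V) : V →ᵃ[ℝ] ℝ :=
  if h : IsHyperplane ℝ H then
    h.choose.toAffineMap - AffineMap.const ℝ V h.choose_spec.choose
  else 0

theorem IsHyperplane.mem_iff {H : Set V} (hH : IsHyperplane ℝ H) {x : V} :
    x ∈ H ↔ hyperplaneFun H x = 0 := by
  have hspec := hH.choose_spec.choose_spec.2
  rw [hyperplaneFun, dif_pos hH]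
  conv_lhs => rw [hspec]
  simp [sub_eq_zero]

def signPattern (A : Finset (Set V)) (x : V) : Finset (Set V) :=
  A.filter fun H => 0 < hyperplaneFun H x

/-- Indexes the regions of the restriction of `A` to `S`. -/
def signPatterns (A : Finset (Set V)) (S : Set V) : Set (Finset (Set V)) :=
  signPattern A '' (S \ ⋃ H ∈ A, H)

def region (A : Finset (Set V)) (P : Finset (Set V)) : Set V :=
  (⋃ H ∈ A, H)ᶜ ∩ signPattern A ⁻¹' {P}

variable {A : Finset (Set V)}

theorem signPattern_subset (A : Finset (Set V)) (x : V) : signPattern A x ⊆ A :=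
  Finset.filter_subset _ _

theorem signPatterns_finite (A : Finset (Set V)) (S : Set V) : (signPatterns A S).Finite :=
  A.powerset.finite_toSet.subset <| Set.image_subset_iff.mpr fun x _ =>
    Finset.mem_powerset.mpr (signPattern_subset A x)

theorem signPatterns_mono {S T : Set V} (h : S ⊆ T) : signPatterns A S ⊆ signPatterns A T :=
  Set.image_mono (Set.sdiff_subset_sdiff_left h)

theorem region_inter_nonempty_iff {P : Finset (Set V)} {S : Set V} :
    (region A P ∩ S).Nonempty ↔ P ∈ signPatterns A S := by
  simp only [region, signPatterns, Set.Nonempty, Set.mem_inter_iff, Set.mem_compl_iff,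
    Set.mem_preimage, Set.mem_singleton_iff, Set.mem_image, Set.mem_sdiff]
  exact ⟨fun ⟨x, ⟨hx, hP⟩, hS⟩ => ⟨x, ⟨hS, hx⟩, hP⟩, fun ⟨x, ⟨hS, hx⟩, hP⟩ => ⟨x, ⟨hx, hP⟩, hS⟩⟩

theorem mem_region_iff {P : Finset (Set V)} {x : V} :
    x ∈ region A P ↔ x ∉ ⋃ H ∈ A, H ∧ signPattern A x = P :=
  Iff.rfl

theorem mem_region_signPattern {x : V} (hx : x ∉ ⋃ H ∈ A, H) : x ∈ region A (signPattern A x) :=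
  ⟨hx, rfl⟩

theorem signPattern_insert (H₀ : Set V) (x : V) :
    signPattern (insert H₀ A) x
      = if 0 < hyperplaneFun H₀ x then insert H₀ (signPattern A x) else signPattern A x :=
  Finset.filter_insert _ _ _

theorem ncard_signPatterns_empty_left (S : Set V) :
    (signPatterns (∅ : Finset (Set V)) S).ncard = if S.Nonempty then 1 else 0 := by
  have hconst : signPattern (∅ : Finset (Set V)) = fun _ => ∅ :=
    funext fun _ => Finset.filter_empty _
  simp only [signPatterns, hconst, Finset.notMem_empty, Set.iUnion_of_empty, Set.iUnion_empty,
    Set.sdiff_empty]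
  split_ifs with h
  · rw [h.image_const, Set.ncard_singleton]
  · rw [Set.not_nonempty_iff_eq_empty.mp h, Set.image_empty, Set.ncard_empty]

theorem signPatterns_empty_right (A : Finset (Set V)) : signPatterns A ∅ = ∅ := by
  simp [signPatterns]

theorem signPatterns_eq_empty_of_subset {H : Set V} (hH : H ∈ A) {S : Set V} (hS : S ⊆ H) :
    signPatterns A S = ∅ :=
  Set.image_eq_empty.mpr <| Set.sdiff_eq_empty.mpr <|
    hS.trans (Finset.subset_set_biUnion_of_mem (f := id) hH)

theorem region_eq_biInter (hA : ∀ H ∈ A, IsHyperplane ℝ H) {P : Finset (Set V)} (hP : P ⊆ A) :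
    region A P = ⋂ H ∈ A,
      {x | if H ∈ P then 0 < hyperplaneFun H x else hyperplaneFun H x < 0} := by
  ext x
  simp only [region, Set.mem_inter_iff, Set.mem_compl_iff, Set.mem_iUnion, not_exists,
    Set.mem_preimage, Set.mem_singleton_iff, Set.mem_iInter, Set.mem_ofPred_eq]
  constructor
  · rintro ⟨hoff, rfl⟩ H hH
    have hne : hyperplaneFun H x ≠ 0 := fun h => hoff H hH ((hA H hH).mem_iff.mpr h)
    simp only [signPattern, Finset.mem_filter, hH, true_and]
    split_ifs with h
    · exact h
    · exact lt_of_le_of_ne (not_lt.mp h) hne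
  · intro h
    refine ⟨fun H hH hxH => ?_, Finset.ext fun H => ?_⟩
    · have hH' := h H hH
      rw [(hA H hH).mem_iff.mp hxH] at hH'
      split_ifs at hH' <;> exact lt_irrefl 0 hH'
    · simp only [signPattern, Finset.mem_filter]
      refine ⟨fun ⟨hH, hpos⟩ => by_contra fun hHP => ?_, fun hHP => ⟨hP hHP, ?_⟩⟩
      · have hH' := h H hH
        rw [if_neg hHP] at hH'
        exact lt_asymm hpos hH'
      · simpa [hHP] using h H (hP hHP)

theorem convex_region (hA : ∀ H ∈ A, IsHyperplane ℝ H) {P : Finset (Set V)} (hP : P ⊆ A) :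
    Convex ℝ (region A P) := by
  rw [region_eq_biInter hA hP]
  refine convex_iInter₂ fun H _ => ?_
  split_ifs
  · exact (convex_Ioi 0).affine_preimage (hyperplaneFun H)
  · exact (convex_Iio 0).affine_preimage (hyperplaneFun H)

theorem signPatterns_insert {H₀ : Set V} (h₀ : IsHyperplane ℝ H₀) (S : Set V) :
    signPatterns (insert H₀ A) S = signPatterns A (S ∩ {z | hyperplaneFun H₀ z < 0})
      ∪ insert H₀ '' signPatterns A (S ∩ {z | 0 < hyperplaneFun H₀ z}) := by
  have hdom : S \ ⋃ H ∈ insert H₀ A, H = ((S ∩ {z | hyperplaneFun H₀ z < 0}) \ ⋃ H ∈ A, H)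
      ∪ ((S ∩ {z | 0 < hyperplaneFun H₀ z}) \ ⋃ H ∈ A, H) := by
    ext x
    simp only [Finset.set_biUnion_insert, Set.mem_sdiff, Set.mem_union, Set.mem_inter_iff,
      Set.mem_ofPred_eq, h₀.mem_iff]
    rcases lt_trichotomy (hyperplaneFun H₀ x) 0 with h | h | h
    · simp [h, ne_of_lt h, lt_asymm h]
    · simp [h]
    · simp [h, ne_of_gt h, lt_asymm h]
  rw [signPatterns, hdom, Set.image_union, signPatterns, signPatterns, Set.image_image]
  congr 1 <;> refine Set.image_congr fun x hx => ?_ <;> rw [signPattern_insert]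
  · exact if_neg hx.1.2.not_gt
  · exact if_pos hx.1.2

end SignPatterns

noncomputable section Chambers

variable {V : Type} [NormedAddCommGroup V] [NormedSpace ℝ V] [FiniteDimensional ℝ V]
  {A : Finset (Set V)}

theorem isOpen_region (hA : ∀ H ∈ A, IsHyperplane ℝ H) {P : Finset (Set V)} (hP : P ⊆ A) :
    IsOpen (region A P) := by
  rw [region_eq_biInter hA hP]
  refine isOpen_biInter_finset fun H _ => ?_
  have hg := (hyperplaneFun H).continuous_of_finiteDimensional
  split_ifs
  · exact isOpen_lt continuous_const hg
  · exact isOpen_lt hg continuous_const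

theorem connectedComponentIn_eq_region (hA : ∀ H ∈ A, IsHyperplane ℝ H) {x : V}
    (hx : x ∉ ⋃ H ∈ A, H) :
    connectedComponentIn (⋃ H ∈ A, H)ᶜ x = region A (signPattern A x) := by
  set P₀ := signPattern A x
  have hP₀ : P₀ ⊆ A := signPattern_subset A x
  apply Set.Subset.antisymm
  · set others := ⋃ P ∈ A.powerset.erase P₀, region A P
    have hcover : (⋃ H ∈ A, H)ᶜ ⊆ region A P₀ ∪ others := fun y hy => by
      by_cases h : signPattern A y = P₀
      · exact Or.inl ⟨hy, h⟩
      · exact Or.inr <| Set.mem_biUnion (Finset.mem_erase.mpr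
          ⟨h, Finset.mem_powerset.mpr (signPattern_subset A y)⟩) (mem_region_signPattern hy)
    have hopen : IsOpen others := isOpen_biUnion fun P hP =>
      isOpen_region hA (Finset.mem_powerset.mp (Finset.mem_of_mem_erase hP))
    have hdisj : Disjoint (region A P₀) others :=
      Set.disjoint_iUnion₂_right.mpr fun P hP => Set.disjoint_left.mpr fun y hy hy' =>
        (Finset.mem_erase.mp hP).1 ((mem_region_iff.mp hy').2.symm.trans (mem_region_iff.mp hy).2)
    exact isPreconnected_connectedComponentIn.subset_left_of_subset_union (isOpen_region hA hP₀)
      hopen hdisj ((connectedComponentIn_subset _ _).trans hcover)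
      ⟨x, mem_connectedComponentIn hx, mem_region_signPattern hx⟩
  · exact (convex_region hA hP₀).isPreconnected.subset_connectedComponentIn
      (mem_region_signPattern hx) Set.inter_subset_left

theorem isChamberIn_univ_iff (hA : ∀ H ∈ A, IsHyperplane ℝ H) {C : Set V} :
    IsChamberIn Set.univ A C ↔ ∃ x ∉ ⋃ H ∈ A, H, C = region A (signPattern A x) := by
  simp only [IsChamberIn, Set.univ_inter]
  exact exists_congr fun x => and_congr_right fun hx => by
    rw [connectedComponentIn_eq_region hA hx]

theorem card_chambers_meet_not_meet (hA : ∀ H ∈ A, IsHyperplane ℝ H) {W P : Set V}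
    (hPW : P ⊆ W) :
    (Nat.card {C : Set V // IsChamberIn Set.univ A C ∧ (C ∩ W).Nonempty ∧ C ∩ P = ∅} : ℤ)
      = (signPatterns A W).ncard - (signPatterns A P).ncard := by
  have hset : {C | IsChamberIn Set.univ A C ∧ (C ∩ W).Nonempty ∧ C ∩ P = ∅}
      = region A '' (signPatterns A W \ signPatterns A P) := by
    ext C
    simp only [Set.mem_ofPred_eq, isChamberIn_univ_iff hA, Set.mem_image, Set.mem_sdiff,
      ← region_inter_nonempty_iff, Set.not_nonempty_iff_eq_empty]
    constructor
    · rintro ⟨⟨x, -, rfl⟩, hW, hP⟩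
      exact ⟨_, ⟨hW, hP⟩, rfl⟩
    · rintro ⟨Q, ⟨hW, hP⟩, rfl⟩
      obtain ⟨y, hy, -⟩ := id hW
      exact ⟨⟨y, hy.1, by rw [(mem_region_iff.mp hy).2]⟩, hW, hP⟩
  have hinj : Set.InjOn (region A) (signPatterns A W) := by
    intro P hP Q _ hPQ
    obtain ⟨y, hy, -⟩ := region_inter_nonempty_iff.mpr hP
    exact (mem_region_iff.mp hy).2.symm.trans (mem_region_iff.mp (hPQ ▸ hy)).2
  have hsub := signPatterns_mono (A := A) hPW
  rw [← Nat.cast_sub (Set.ncard_le_ncard hsub (signPatterns_finite A W)),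
    ← Set.ncard_sdiff hsub (signPatterns_finite A P),
    ← (hinj.mono Set.sdiff_subset).ncard_image, ← hset, Nat.cast_inj]
  exact Nat.card_coe_set_eq _

end Chambers

noncomputable section DeletionRestriction

open Filter Topology

variable {V : Type} [NormedAddCommGroup V] [NormedSpace ℝ V] [FiniteDimensional ℝ V]
  {B : Finset (Set V)}

/-- A point of `S ∩ {g = 0}` off `B` can be pushed along a line of `S` to either side of
`{g = 0}` without leaving its (open) region. -/
theorem signPattern_mem_sides (hB : ∀ H ∈ B, IsHyperplane ℝ H) {S : AffineSubspace ℝ V}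
    {g : V →ᵃ[ℝ] ℝ} {x y : V} (hxS : x ∈ S) (hxB : x ∉ ⋃ H ∈ B, H) (hgx : g x = 0)
    (hyS : y ∈ S) (hgy : g y ≠ 0) :
    signPattern B x ∈ signPatterns B (S ∩ {z | g z < 0}) ∩ signPatterns B (S ∩ {z | 0 < g z}) := by
  let φ : ℝ → V := fun s => AffineMap.lineMap x y (s / g y)
  have hgφ : ∀ s, g (φ s) = s := fun s => by
    rw [AffineMap.apply_lineMap, hgx, AffineMap.lineMap_apply_module]
    simp [hgy]
  have hR : ∀ᶠ s in 𝓝 (0 : ℝ), φ s ∈ region B (signPattern B x) := by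
    have hφ : Continuous φ := by fun_prop
    refine hφ.continuousAt.preimage_mem_nhds
      ((isOpen_region hB (signPattern_subset B x)).mem_nhds ?_)
    simpa [φ] using mem_region_signPattern hxB
  obtain ⟨s₁, hs₁R, hs₁⟩ :=
    ((hR.filter_mono nhdsWithin_le_nhds).and (eventually_mem_nhdsWithin (s := Set.Iio 0))).exists
  obtain ⟨s₂, hs₂R, hs₂⟩ :=
    ((hR.filter_mono nhdsWithin_le_nhds).and (eventually_mem_nhdsWithin (s := Set.Ioi 0))).exists
  simp only [Set.mem_inter_iff, ← region_inter_nonempty_iff]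
  exact ⟨⟨φ s₁, hs₁R, AffineMap.lineMap_mem _ hxS hyS, by rw [Set.mem_ofPred_eq, hgφ]; exact hs₁⟩,
    ⟨φ s₂, hs₂R, AffineMap.lineMap_mem _ hxS hyS, by rw [Set.mem_ofPred_eq, hgφ]; exact hs₂⟩⟩

theorem signPatterns_sides_union (hB : ∀ H ∈ B, IsHyperplane ℝ H) {S : AffineSubspace ℝ V}
    {g : V →ᵃ[ℝ] ℝ} {y : V} (hyS : y ∈ S) (hgy : g y ≠ 0) :
    signPatterns B (S ∩ {z | g z < 0}) ∪ signPatterns B (S ∩ {z | 0 < g z})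
      = signPatterns B S := by
  refine (Set.union_subset (signPatterns_mono Set.inter_subset_left)
    (signPatterns_mono Set.inter_subset_left)).antisymm ?_
  rintro _ ⟨x, ⟨hxS, hxB⟩, rfl⟩
  rcases lt_trichotomy (g x) 0 with h | h | h
  · exact Or.inl ⟨x, ⟨⟨hxS, h⟩, hxB⟩, rfl⟩
  · exact Or.inl (signPattern_mem_sides hB hxS hxB h hyS hgy).1
  · exact Or.inr ⟨x, ⟨⟨hxS, h⟩, hxB⟩, rfl⟩

/-- The inclusion `⊆` is the intermediate value theorem on the convex set `region ∩ S`. -/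
theorem signPatterns_sides_inter (hB : ∀ H ∈ B, IsHyperplane ℝ H) {S : AffineSubspace ℝ V}
    {g : V →ᵃ[ℝ] ℝ} {y : V} (hyS : y ∈ S) (hgy : g y ≠ 0) :
    signPatterns B (S ∩ {z | g z < 0}) ∩ signPatterns B (S ∩ {z | 0 < g z})
      = signPatterns B (S ∩ {z | g z = 0}) := by
  refine Set.Subset.antisymm ?_ ?_
  · rintro P ⟨h₁, h₂⟩
    rw [← region_inter_nonempty_iff] at h₁ h₂ ⊢
    obtain ⟨x₁, hx₁R, hx₁S, hx₁⟩ := h₁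
    obtain ⟨x₂, hx₂R, hx₂S, hx₂⟩ := h₂
    have hP : P ⊆ B := (mem_region_iff.mp hx₁R).2 ▸ signPattern_subset B x₁
    have hconn : IsPreconnected (region B P ∩ S) :=
      ((convex_region hB hP).inter S.convex).isPreconnected
    obtain ⟨z, hz, hgz⟩ := hconn.intermediate_value ⟨hx₁R, hx₁S⟩ ⟨hx₂R, hx₂S⟩
      g.continuous_of_finiteDimensional.continuousOn ⟨hx₁.le, hx₂.le⟩
    exact ⟨z, hz.1, hz.2, hgz⟩
  · rintro _ ⟨x, ⟨⟨hxS, hx⟩, hxB⟩, rfl⟩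
    exact signPattern_mem_sides hB hxS hxB hx hyS hgy

theorem ncard_signPatterns_insert (hB : ∀ H ∈ B, IsHyperplane ℝ H) {H₀ : Set V} (hH₀B : H₀ ∉ B)
    (h₀ : IsHyperplane ℝ H₀) {S : AffineSubspace ℝ V} (hS : ¬ (S : Set V) ⊆ H₀) :
    (signPatterns (insert H₀ B) S).ncard
      = (signPatterns B S).ncard + (signPatterns B (S ∩ H₀)).ncard := by
  obtain ⟨y, hyS, hyH₀⟩ := Set.not_subset.mp hS
  have hgy : hyperplaneFun H₀ y ≠ 0 := mt h₀.mem_iff.mpr hyH₀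
  have hH₀ : (S : Set V) ∩ H₀ = (S : Set V) ∩ {z | hyperplaneFun H₀ z = 0} := by
    ext z
    simp [h₀.mem_iff]
  have hfree : ∀ T, ∀ P ∈ signPatterns B T, H₀ ∉ P := by
    rintro T _ ⟨x, -, rfl⟩ h
    exact hH₀B (signPattern_subset B x h)
  have hdisj : Disjoint (signPatterns B (S ∩ {z | hyperplaneFun H₀ z < 0}))
      (insert H₀ '' signPatterns B (S ∩ {z | 0 < hyperplaneFun H₀ z})) := by
    refine Set.disjoint_left.mpr fun P hP ⟨Q, _, hQP⟩ => hfree _ P hP ?_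
    exact hQP ▸ Finset.mem_insert_self H₀ Q
  rw [signPatterns_insert h₀, Set.ncard_union_eq hdisj (signPatterns_finite _ _)
      ((signPatterns_finite _ _).image _),
    (Finset.insert_erase_invOn.2.injOn.mono (hfree _)).ncard_image,
    ← signPatterns_sides_union hB hyS hgy, hH₀, ← signPatterns_sides_inter hB hyS hgy,
    Set.ncard_union_add_ncard_inter _ _ (signPatterns_finite _ _) (signPatterns_finite _ _)]

theorem ncard_signPatterns_eq_whitneyCount {A : Finset (Set V)}
    (hA : ∀ H ∈ A, IsHyperplane ℝ H) (S : AffineSubspace ℝ V) :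
    ((signPatterns A S).ncard : ℤ) = whitneyCount ℝ A S := by
  induction A using Finset.induction_on generalizing S with
  | empty => rw [ncard_signPatterns_empty_left, whitneyCount_empty_left]; split_ifs <;> rfl
  | insert H₀ B hH₀B ih =>
    have h₀ := hA H₀ (Finset.mem_insert_self _ _)
    have hB : ∀ H ∈ B, IsHyperplane ℝ H := fun H hH => hA H (Finset.mem_insert_of_mem hH)
    rw [whitneyCount_insert hH₀B]
    by_cases hS : (S : Set V) ⊆ H₀
    · rw [signPatterns_eq_empty_of_subset (Finset.mem_insert_self _ _) hS,
        Set.inter_eq_left.mpr hS, ← two_mul, pow_mul, neg_one_sq, one_pow, one_mul,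
        Set.ncard_empty, Nat.cast_zero, sub_self]
    · obtain ⟨T, hT⟩ := h₀.exists_affineSubspace
      have hST : (S : Set V) ∩ H₀ = (S ⊓ T : AffineSubspace ℝ V) := by rw [← hT]; rfl
      rw [ncard_signPatterns_insert hB hH₀B h₀ hS, Nat.cast_add, ih hB, hST, ih hB, ← hST]
      rcases ((S : Set V) ∩ H₀).eq_empty_or_nonempty with hempty | hne
      · rw [hempty, whitneyCount_empty_right]
        ring
      · rw [← flatDim_inter_add_one h₀ hne hS,
          neg_one_pow_congr (n := 1) (by simp only [Nat.even_iff]; omega), pow_one]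
        ring

end DeletionRestriction

theorem chambers_of_flag_general {ℓ : ℕ} (A : Finset (Set (Fin ℓ → ℝ)))
    (hA : ∀ H ∈ A, IsHyperplane ℝ H)
    (F : ℕ → Set (Fin ℓ → ℝ))
    (hgen : ∀ q ≤ ℓ, IsGenericFlat ℝ q A (F q))
    (hchain : ∀ q < ℓ, F q ⊆ F (q + 1))
    (μ : Set (Fin ℓ → ℝ) → ℤ) (hμ : IsMobiusIn Set.univ A μ)
    (q : ℕ) (hq : q ≤ ℓ) :
    (Nat.card {C : Set (Fin ℓ → ℝ) //
        IsChamberIn Set.univ A C ∧ (C ∩ F q).Nonempty ∧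
          ∀ p, q = p + 1 → C ∩ F p = ∅} : ℤ)
      = (poinIn ℝ Set.univ A μ).coeff q := by
  have hcount : ∀ p ≤ ℓ,
      ((signPatterns A (F p)).ncard : ℤ) = signedRankSum ℝ Set.univ A (Set.Iic p) := by
    intro p hp
    obtain ⟨⟨S, hS⟩, -⟩ := hgen p hp
    rw [← hS, ncard_signPatterns_eq_whitneyCount hA, hS, whitneyCount_of_isGenericFlat (hgen p hp)]
  -- `P` is `F^{q-1}`, with the convention `F^{-1} = ∅`.
  obtain ⟨P, hPq, hPC, hPcount⟩ : ∃ P ⊆ F q,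
      (∀ C : Set (Fin ℓ → ℝ), (∀ p, q = p + 1 → C ∩ F p = ∅) ↔ C ∩ P = ∅) ∧
      ((signPatterns A P).ncard : ℤ) = signedRankSum ℝ Set.univ A (Set.Iio q) := by
    rcases q with _ | p
    · exact ⟨∅, Set.empty_subset _, by simp, by simp [signPatterns_empty_right, signedRankSum]⟩
    · refine ⟨F p, hchain p hq, fun C => ⟨fun h => h p rfl, fun h p' hp' => ?_⟩, ?_⟩
      · rwa [Nat.succ_injective hp'] at h
      · rw [hcount p (by omega), Set.Iio_add_one_eq_Iic]
  simp_rw [hPC]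
  rw [card_chambers_meet_not_meet hA hPq, hcount q hq, hPcount, signedRankSum_Iic_sub_Iio,
    coeff_poinIn_eq_signedRankSum (fun H hH => (hA H hH).not_univ_subset) hμ]

/-- Let `F⁰ ⊂ F¹ ⊂ ⋯ ⊂ F^ℓ = ℝ^ℓ` be a generic flag for a finite
arrangement `A` of affine hyperplanes in `ℝ^ℓ` (with the convention `F⁻¹ = ∅`).  For
each `q ≤ ℓ`, the number of chambers `C` with `C ∩ F^q ≠ ∅` and `C ∩ F^{q-1} = ∅`
equals `b_q(A)`, the coefficient of `t^q` in the Poincaré polynomial `π(A,t)`. -/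
theorem chambers_of_flag {ℓ : ℕ} (A : Finset (Set (Fin ℓ → ℝ)))
    (hA : ∀ H ∈ A, IsHyperplane ℝ H)
    (F : ℕ → Set (Fin ℓ → ℝ))
    (hgen : ∀ q ≤ ℓ, IsGenericFlat ℝ q A (F q))
    (hchain : ∀ q < ℓ, F q ⊆ F (q + 1))
    (htop : F ℓ = Set.univ)
    (μ : Set (Fin ℓ → ℝ) → ℤ) (hμ : IsMobiusIn Set.univ A μ)
    (q : ℕ) (hq : q ≤ ℓ) :
    (Nat.card {C : Set (Fin ℓ → ℝ) //
        IsChamberIn Set.univ A C ∧ (C ∩ F q).Nonempty ∧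
          ∀ p, q = p + 1 → C ∩ F p = ∅} : ℤ)
      = (poinIn ℝ Set.univ A μ).coeff q :=
  chambers_of_flag_general A hA F hgen hchain μ hμ q hq
end
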